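/- arXiv:2509.17341 — 5 statements merged into one kernel-verified Lean document; each statement's English description precedes it below -/
import Mathlib

section
/- Let N ≥ 1, let L be a real N×N matrix, and let λ > 0 be such that x ⬝ (L x) ≥ λ‖x‖² for every x ∈ ℝᴺ. Let α > 0 and β satisfy βλ ≥ 1, let t_e > 0, and let h be the scaling function associated with t_e. Suppose e : ℝ → ℝᴺ is differentiable on [0, t_e) and satisfies e'(t) = (−α + β·h'(t)/h(t)) · (L e(t)) for all t ∈ (0, t_e), where h'(t) = cos(πt/t_e) + 1. Then for every t ∈ [0, t_e), ‖e(t)‖² ≤ (h(t)²/t_e²)·exp(−2αλt)·‖e(0)‖²; in particular ‖e(t)‖ → 0 as t → t_e⁻, and if e is continuous at t_e then e(t_e) = 0. -/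
open Matrix Filter Topology

noncomputable def scalingFn (te t : ℝ) : ℝ :=
  if t < te then (te / Real.pi) * Real.sin (Real.pi * t / te) + t - te else 1

/-!
Along a solution, `V = ‖e‖²` satisfies `V' = 2c⟪e, L e⟫` with gain `c = -α + β h'/h ≤ 0`, so
coercivity of `L` gives `V' ≤ 2cλV ≤ (2h'/h - 2αλ) V`, using `βλ ≥ 1` and `h'/h ≤ 0`.
The weight `w = h² e^{-2αλt}` has logarithmic derivative exactly `2h'/h - 2αλ`, so `V / w` is
nonincreasing on `[0, t_e)`; this is the bound, and it forces `e(t) → 0` because `h(t) → 0`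
as `t → t_e⁻`.
-/

open Real Set
open scoped InnerProductSpace

noncomputable def smoothScalingFn (te t : ℝ) : ℝ := te / π * sin (π * t / te) + t - te

lemma scalingFn_of_lt {te t : ℝ} (ht : t < te) : scalingFn te t = smoothScalingFn te t :=
  if_pos ht

lemma continuous_smoothScalingFn (te : ℝ) : Continuous (smoothScalingFn te) := by
  unfold smoothScalingFn
  fun_prop

lemma hasDerivAt_smoothScalingFn {te : ℝ} (hte : te ≠ 0) (t : ℝ) :
    HasDerivAt (smoothScalingFn te) (cos (π * t / te) + 1) t := by
  have h : HasDerivAt (fun t => te / π * sin (π * t / te) + t - te)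
      (te / π * (cos (π * t / te) * (π * 1 / te)) + 1) t :=
    (((((hasDerivAt_id t).const_mul π).div_const te).sin.const_mul (te / π)).add
      (hasDerivAt_id t)).sub_const te
  exact h.congr_deriv (by field_simp)

lemma smoothScalingFn_zero (te : ℝ) : smoothScalingFn te 0 = -te := by
  simp [smoothScalingFn]

lemma smoothScalingFn_self (te : ℝ) : smoothScalingFn te te = 0 := by
  rcases eq_or_ne te 0 with rfl | hte
  · simp [smoothScalingFn]
  · simp [smoothScalingFn, mul_div_assoc, div_self hte]

lemma smoothScalingFn_neg {te t : ℝ} (hte : 0 < te) (ht : t < te) : smoothScalingFn te t < 0 := by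
  set u := π * t / te
  have hu : u < π := by
    rw [div_lt_iff₀ hte]
    exact mul_lt_mul_of_pos_left ht pi_pos
  have hsin : sin u < π - u := by simpa only [sin_pi_sub] using sin_lt (sub_pos.2 hu)
  have hform : smoothScalingFn te t = te / π * (sin u + u - π) := by
    simp only [smoothScalingFn, u]
    field_simp [pi_ne_zero, hte.ne']
  rw [hform]
  exact mul_neg_of_pos_of_neg (by positivity) (by linarith)

lemma tendsto_scalingFn_nhdsLT (te : ℝ) : Tendsto (scalingFn te) (𝓝[<] te) (𝓝 0) := by
  have h := (continuous_smoothScalingFn te).continuousAt (x := te)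
  rw [ContinuousAt, smoothScalingFn_self] at h
  exact (h.mono_left nhdsWithin_le_nhds).congr'
    (eventually_nhdsWithin_of_forall fun t ht => (scalingFn_of_lt ht).symm)

lemma antitoneOn_div_of_deriv_le_mul {s : Set ℝ} (hs : Convex ℝ s) {u w u' k : ℝ → ℝ}
    (hu : ContinuousOn u s) (hw : ContinuousOn w s) (hw0 : ∀ t ∈ s, 0 < w t)
    (hu' : ∀ t ∈ interior s, HasDerivAt u (u' t) t)
    (hw' : ∀ t ∈ interior s, HasDerivAt w (k t * w t) t)
    (hle : ∀ t ∈ interior s, u' t ≤ k t * u t) :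
    AntitoneOn (fun t => u t / w t) s := by
  have hderiv : ∀ t ∈ interior s,
      HasDerivAt (fun t => u t / w t) ((u' t - k t * u t) / w t) t := by
    intro t ht
    have hwt := hw0 t (interior_subset ht)
    exact ((hu' t ht).div (hw' t ht) hwt.ne').congr_deriv (by field_simp)
  refine antitoneOn_of_deriv_nonpos hs (hu.div hw fun t ht => (hw0 t ht).ne')
    (fun t ht => (hderiv t ht).differentiableAt.differentiableWithinAt) fun t ht => ?_
  rw [(hderiv t ht).deriv]
  exact div_nonpos_of_nonpos_of_nonneg (sub_nonpos.2 (hle t ht)) (hw0 t (interior_subset ht)).le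

lemma HasDerivAt.sq_mul_exp {h : ℝ → ℝ} {h' t : ℝ} (a : ℝ) (hh : HasDerivAt h h' t)
    (h0 : h t ≠ 0) :
    HasDerivAt (fun s => h s ^ 2 * Real.exp (a * s))
      ((2 * (h' / h t) + a) * (h t ^ 2 * Real.exp (a * t))) t :=
  ((hh.pow 2).mul ((hasDerivAt_id t).const_mul a).exp).congr_deriv
    (by simp only [Pi.pow_apply, id_eq]; field_simp; ring)

lemma two_mul_gain_mul_le {α β lam q P V : ℝ} (hlam : 0 < lam) (hα : 0 ≤ α)
    (hβ : 1 ≤ β * lam) (hq : q ≤ 0) (hV : 0 ≤ V) (hP : lam * V ≤ P) :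
    2 * ((-α + β * q) * P) ≤ (2 * q - 2 * α * lam) * V := by
  have hβ0 : 0 ≤ β := by nlinarith
  have hgain : -α + β * q ≤ 0 := by nlinarith
  have hqV : (β * lam - 1) * (q * V) ≤ 0 :=
    mul_nonpos_of_nonneg_of_nonpos (by linarith) (mul_nonpos_of_nonpos_of_nonneg hq hV)
  nlinarith [mul_le_mul_of_nonpos_left hP hgain]

theorem norm_sq_le_of_consensus {E : Type*} [NormedAddCommGroup E] [InnerProductSpace ℝ E]
    {A : E → E} {lam α β te : ℝ} (hlam : 0 < lam)
    (hquad : ∀ x, lam * ‖x‖ ^ 2 ≤ ⟪x, A x⟫_ℝ) (hα : 0 ≤ α) (hβ : 1 ≤ β * lam) (hte : 0 < te)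
    {e : ℝ → E} (hcont : ContinuousOn e (Ico 0 te))
    (hode : ∀ t ∈ Ioo 0 te,
      HasDerivAt e ((-α + β * ((cos (π * t / te) + 1) / scalingFn te t)) • A (e t)) t)
    {t : ℝ} (ht : t ∈ Ico 0 te) :
    ‖e t‖ ^ 2 ≤ scalingFn te t ^ 2 / te ^ 2 * exp (-(2 * α * lam) * t) * ‖e 0‖ ^ 2 := by
  set w : ℝ → ℝ := fun s => smoothScalingFn te s ^ 2 * exp (-(2 * α * lam) * s)
  have hw0 : ∀ s ∈ Ico 0 te, 0 < w s := fun s hs =>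
    mul_pos (sq_pos_of_neg (smoothScalingFn_neg hte hs.2)) (exp_pos _)
  have hanti : AntitoneOn (fun s => ‖e s‖ ^ 2 / w s) (Ico 0 te) := by
    refine antitoneOn_div_of_deriv_le_mul (convex_Ico 0 te) (hcont.norm.pow 2)
      (((continuous_smoothScalingFn te).pow 2).mul (by fun_prop)).continuousOn hw0
      (u' := fun s => 2 * ((-α + β * ((cos (π * s / te) + 1) / smoothScalingFn te s)) *
        ⟪e s, A (e s)⟫_ℝ))
      (k := fun s => 2 * ((cos (π * s / te) + 1) / smoothScalingFn te s) - 2 * α * lam)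
      ?_ ?_ ?_ <;> rw [interior_Ico] <;> intro s hs
    · have hde := hode s hs
      rw [scalingFn_of_lt hs.2] at hde
      simpa only [real_inner_smul_right] using hde.norm_sq
    · convert (hasDerivAt_smoothScalingFn hte.ne' s).sq_mul_exp (-(2 * α * lam))
        (smoothScalingFn_neg hte hs.2).ne using 1
      ring
    · have hq : (cos (π * s / te) + 1) / smoothScalingFn te s ≤ 0 :=
        div_nonpos_of_nonneg_of_nonpos (by linarith [neg_one_le_cos (π * s / te)])
          (smoothScalingFn_neg hte hs.2).le
      exact two_mul_gain_mul_le hlam hα hβ hq (by positivity) (hquad (e s))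
  have hmono := hanti ⟨le_rfl, hte⟩ ht ht.1
  simp only [w, smoothScalingFn_zero, neg_sq, mul_zero, exp_zero, mul_one] at hmono
  rw [div_le_iff₀ (hw0 t ht)] at hmono
  rw [scalingFn_of_lt ht.2]
  calc ‖e t‖ ^ 2 ≤ ‖e 0‖ ^ 2 / te ^ 2 * w t := hmono
    _ = _ := by ring

lemma tendsto_norm_nhdsLT_zero_of_sq_le {E : Type*} [NormedAddCommGroup E] {e : ℝ → E}
    {te c C : ℝ} (hte : 0 < te)
    (hbound : ∀ t ∈ Ico 0 te, ‖e t‖ ^ 2 ≤ scalingFn te t ^ 2 / te ^ 2 * exp (c * t) * C) :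
    Tendsto (fun t => ‖e t‖) (𝓝[<] te) (𝓝 0) := by
  have hlim : Tendsto (fun t => scalingFn te t ^ 2 / te ^ 2 * exp (c * t) * C) (𝓝[<] te) (𝓝 0) := by
    simpa using ((((tendsto_scalingFn_nhdsLT te).pow 2).div_const (te ^ 2)).mul
      (((continuous_const.mul continuous_id).rexp.tendsto te).mono_left
        nhdsWithin_le_nhds)).mul_const C
  have hsq : Tendsto (fun t => ‖e t‖ ^ 2) (𝓝[<] te) (𝓝 0) := by
    refine squeeze_zero' (Eventually.of_forall fun t => by positivity) ?_ hlim
    filter_upwards [Ioo_mem_nhdsLT hte] with t ht using hbound t (Ioo_subset_Ico_self ht)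
  simpa [sqrt_sq (norm_nonneg _)] using hsq.sqrt

theorem prescribed_time_consensus_general
    (N : ℕ) (L : Matrix (Fin N) (Fin N) ℝ)
    (lam : ℝ) (hlam : 0 < lam)
    (hquad : ∀ x : EuclideanSpace ℝ (Fin N), lam * ‖x‖ ^ 2 ≤ x ⬝ᵥ L.mulVec x)
    (α β : ℝ) (hα : 0 < α) (hβ : 1 ≤ β * lam)
    (te : ℝ) (hte : 0 < te)
    (e : ℝ → EuclideanSpace ℝ (Fin N))
    (hdiff : DifferentiableOn ℝ e (Set.Ico 0 te))
    (hode : ∀ t ∈ Set.Ioo (0 : ℝ) te,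
      HasDerivAt e
        ((-α + β * ((Real.cos (Real.pi * t / te) + 1) / scalingFn te t)) •
          (WithLp.toLp 2 (L.mulVec (e t)) : EuclideanSpace ℝ (Fin N))) t) :
    (∀ t ∈ Set.Ico (0 : ℝ) te,
      ‖e t‖ ^ 2 ≤ (scalingFn te t) ^ 2 / te ^ 2 * Real.exp (-(2 * α * lam) * t) * ‖e 0‖ ^ 2) ∧
    Tendsto (fun t => ‖e t‖) (nhdsWithin te (Set.Iio te)) (nhds 0) ∧
    (ContinuousAt e te → e te = 0) := by
  have hcoercive (x : EuclideanSpace ℝ (Fin N)) :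
      lam * ‖x‖ ^ 2 ≤ ⟪x, WithLp.toLp 2 (L *ᵥ x)⟫_ℝ := by
    simpa [EuclideanSpace.inner_eq_star_dotProduct, dotProduct_comm] using hquad x
  have hbound (t : ℝ) (ht : t ∈ Ico 0 te) :=
    norm_sq_le_of_consensus hlam hcoercive hα.le hβ hte hdiff.continuousOn hode ht
  have hlim := tendsto_norm_nhdsLT_zero_of_sq_le hte hbound
  refine ⟨hbound, hlim, fun hcont => norm_eq_zero.1 ?_⟩
  exact tendsto_nhds_unique (hcont.norm.mono_left nhdsWithin_le_nhds) hlim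

/-- Theorem 1 of the paper: prescribed-time consensus for the
time-to-go error vector `e` under the protocol `e' = (−α + β h'/h) L e`. -/
theorem prescribed_time_consensus
    (N : ℕ) (hN : 1 ≤ N) (L : Matrix (Fin N) (Fin N) ℝ)
    (lam : ℝ) (hlam : 0 < lam)
    (hquad : ∀ x : EuclideanSpace ℝ (Fin N), lam * ‖x‖ ^ 2 ≤ x ⬝ᵥ L.mulVec x)
    (α β : ℝ) (hα : 0 < α) (hβ : 1 ≤ β * lam)
    (te : ℝ) (hte : 0 < te)
    (e : ℝ → EuclideanSpace ℝ (Fin N))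
    (hdiff : DifferentiableOn ℝ e (Set.Ico 0 te))
    (hode : ∀ t ∈ Set.Ioo (0 : ℝ) te,
      HasDerivAt e
        ((-α + β * ((Real.cos (Real.pi * t / te) + 1) / scalingFn te t)) •
          (WithLp.toLp 2 (L.mulVec (e t)) : EuclideanSpace ℝ (Fin N))) t) :
    (∀ t ∈ Set.Ico (0 : ℝ) te,
      ‖e t‖ ^ 2 ≤ (scalingFn te t) ^ 2 / te ^ 2 * Real.exp (-(2 * α * lam) * t) * ‖e 0‖ ^ 2) ∧
    Tendsto (fun t => ‖e t‖) (nhdsWithin te (Set.Iio te)) (nhds 0) ∧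
    (ContinuousAt e te → e te = 0) :=
  prescribed_time_consensus_general N L lam hlam hquad α β hα hβ te hte e hdiff hode
end

section
/- Consider the planar engagement kinematics with a pursuer under deviated pursuit guidance: constants V_T, γ_T, V_P with V_P ≠ 0 and V_P² ≠ V_T², differentiable functions r, θ, γ_P : ℝ → ℝ and a control a : ℝ → ℝ satisfying, on an interval I, r' = V_T cos(γ_T − θ) − V_P cos δ, r·θ' = V_T sin(γ_T − θ) − V_P sin δ, and γ_P' = a/V_P, where δ = γ_P − θ. Define V_r = V_T cos(γ_T − θ) − V_P cos δ, V_θ = V_T sin(γ_T − θ) − V_P sin δ, and t_go = r·(V_r + 2 V_P cos δ − V_θ tan δ)/(V_P² − V_T²). Then at every t ∈ I with r(t) > 0 and cos δ(t) ≠ 0, t_go is differentiable with t_go'(t) = −1 + V_θ(t)²·sec² δ(t)/(V_P² − V_T²) − (r(t)·V_θ(t)·sec² δ(t)/(V_P·(V_P² − V_T²)))·a(t). -/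
/-- Deviation (lead) angle `δ = γ_P − θ`. -/
noncomputable def devAngle (θ γP : ℝ → ℝ) (t : ℝ) : ℝ := γP t - θ t

/-- Relative velocity component along the line of sight (constant pursuer speed). -/
noncomputable def Vrad (VT γT VP : ℝ) (θ γP : ℝ → ℝ) (t : ℝ) : ℝ :=
  VT * Real.cos (γT - θ t) - VP * Real.cos (devAngle θ γP t)

/-- Relative velocity component across the line of sight (constant pursuer speed). -/
noncomputable def Vlos (VT γT VP : ℝ) (θ γP : ℝ → ℝ) (t : ℝ) : ℝ :=
  VT * Real.sin (γT - θ t) - VP * Real.sin (devAngle θ γP t)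

/-- Deviated-pursuit time-to-go
`t_go = r (V_r + 2 V_P cos δ − V_θ tan δ)/(V_P² − V_T²)`. -/
noncomputable def tgoDP (VT γT VP : ℝ) (r θ γP : ℝ → ℝ) (t : ℝ) : ℝ :=
  r t * (Vrad VT γT VP θ γP t + 2 * VP * Real.cos (devAngle θ γP t)
      - Vlos VT γT VP θ γP t * Real.tan (devAngle θ γP t)) / (VP ^ 2 - VT ^ 2)

/-!
Write `t_go = r E / (V_P² − V_T²)`. In line-of-sight coordinates the relative velocity obeys
`V_r' = V_θ θ' + V_P sin δ γ_P'` and `V_θ' = −V_r θ' − V_P cos δ γ_P'`. Differentiating `r E`, the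
`V_P sin δ γ_P'` terms coming from `V_r`, `2 V_P cos δ` and `V_θ tan δ` cancel, leaving only the
control term `−r V_θ sec² δ γ_P'`. After substituting `r θ' = V_θ`, the rest collapses, via
`V_r² + V_θ² + 2 V_P (V_r cos δ + V_θ sin δ) = V_T² − V_P²`, to `−(V_P² − V_T²) + V_θ² sec² δ`.
-/

section Kinematics

variable {VT γT VP : ℝ} {θ γP : ℝ → ℝ} {θd γd t : ℝ}

/-- With `V_rel = V_T − V_P`, this is `|V_rel|² + 2 V_P · V_rel = |V_T|² − |V_P|²` in line-of-sight
coordinates. -/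
theorem Vrad_sq_add_Vlos_sq_add (VT γT VP : ℝ) (θ γP : ℝ → ℝ) (t : ℝ) :
    Vrad VT γT VP θ γP t ^ 2 + Vlos VT γT VP θ γP t ^ 2
        + 2 * VP * (Vrad VT γT VP θ γP t * Real.cos (devAngle θ γP t)
          + Vlos VT γT VP θ γP t * Real.sin (devAngle θ γP t))
      = VT ^ 2 - VP ^ 2 := by
  unfold Vrad Vlos
  linear_combination VT ^ 2 * Real.sin_sq_add_cos_sq (γT - θ t)
    - VP ^ 2 * Real.sin_sq_add_cos_sq (devAngle θ γP t)

theorem hasDerivAt_devAngle (hθ : HasDerivAt θ θd t) (hγ : HasDerivAt γP γd t) :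
    HasDerivAt (devAngle θ γP) (γd - θd) t :=
  hγ.sub hθ

theorem hasDerivAt_Vrad (hθ : HasDerivAt θ θd t) (hγ : HasDerivAt γP γd t) :
    HasDerivAt (Vrad VT γT VP θ γP)
      (Vlos VT γT VP θ γP t * θd + VP * Real.sin (devAngle θ γP t) * γd) t := by
  have hcos := (Real.hasDerivAt_cos _).comp t (hθ.const_sub γT)
  have hcosδ := (Real.hasDerivAt_cos _).comp t (hasDerivAt_devAngle hθ hγ)
  refine ((hcos.const_mul VT).sub (hcosδ.const_mul VP)).congr_deriv ?_
  unfold Vlos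
  ring

theorem hasDerivAt_Vlos (hθ : HasDerivAt θ θd t) (hγ : HasDerivAt γP γd t) :
    HasDerivAt (Vlos VT γT VP θ γP)
      (-(Vrad VT γT VP θ γP t * θd) - VP * Real.cos (devAngle θ γP t) * γd) t := by
  have hsin := (Real.hasDerivAt_sin _).comp t (hθ.const_sub γT)
  have hsinδ := (Real.hasDerivAt_sin _).comp t (hasDerivAt_devAngle hθ hγ)
  refine ((hsin.const_mul VT).sub (hsinδ.const_mul VP)).congr_deriv ?_
  unfold Vrad
  ring

end Kinematics

theorem tgoDP_deriv_general
    (VT γT VP : ℝ) (hV2 : VP ^ 2 ≠ VT ^ 2)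
    (I : Set ℝ) (r θ γP a θd : ℝ → ℝ)
    (hr : ∀ t ∈ I, HasDerivAt r (Vrad VT γT VP θ γP t) t)
    (hθ : ∀ t ∈ I, HasDerivAt θ (θd t) t)
    (hθd : ∀ t ∈ I, r t * θd t = Vlos VT γT VP θ γP t)
    (hγ : ∀ t ∈ I, HasDerivAt γP (a t / VP) t) :
    ∀ t ∈ I, 0 < r t → Real.cos (devAngle θ γP t) ≠ 0 →
      HasDerivAt (tgoDP VT γT VP r θ γP)
        (-1 + Vlos VT γT VP θ γP t ^ 2 * (1 / Real.cos (devAngle θ γP t) ^ 2)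
              / (VP ^ 2 - VT ^ 2)
          - (r t * Vlos VT γT VP θ γP t * (1 / Real.cos (devAngle θ γP t) ^ 2)
              / (VP * (VP ^ 2 - VT ^ 2))) * a t) t := by
  intro t ht _ hcos
  have hδ := hasDerivAt_devAngle (hθ t ht) (hγ t ht)
  have hE := ((hasDerivAt_Vrad (VT := VT) (γT := γT) (VP := VP) (hθ t ht) (hγ t ht)).add
      (((Real.hasDerivAt_cos _).comp t hδ).const_mul (2 * VP))).sub
    ((hasDerivAt_Vlos (VT := VT) (γT := γT) (VP := VP) (hθ t ht) (hγ t ht)).mul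
      ((Real.hasDerivAt_tan hcos).comp t hδ))
  refine (((hr t ht).mul hE).div_const (VP ^ 2 - VT ^ 2)).congr_deriv ?_
  simp only [Pi.add_apply, Pi.sub_apply, Pi.mul_apply, Function.comp_apply,
    Real.tan_eq_sin_div_cos]
  have hspeed := Vrad_sq_add_Vlos_sq_add VT γT VP θ γP t
  set Vr := Vrad VT γT VP θ γP t
  set Vθ := Vlos VT γT VP θ γP t
  set k := Real.cos (devAngle θ γP t)
  set s := Real.sin (devAngle θ γP t)
  have hc : VP ^ 2 - VT ^ 2 ≠ 0 := sub_ne_zero.mpr hV2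
  field_simp
  linear_combination (k ^ 2 * Vθ + 2 * VP * s * k ^ 2 + k * s * Vr + Vθ) * hθd t ht
    + k ^ 2 * hspeed

/-- equation (17) of the paper: the derivative of the
deviated-pursuit time-to-go along the engagement kinematics. -/
theorem tgoDP_deriv
    (VT γT VP : ℝ) (hVP : VP ≠ 0) (hV2 : VP ^ 2 ≠ VT ^ 2)
    (I : Set ℝ) (r θ γP a θd : ℝ → ℝ)
    (hr : ∀ t ∈ I, HasDerivAt r (Vrad VT γT VP θ γP t) t)
    (hθ : ∀ t ∈ I, HasDerivAt θ (θd t) t)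
    (hθd : ∀ t ∈ I, r t * θd t = Vlos VT γT VP θ γP t)
    (hγ : ∀ t ∈ I, HasDerivAt γP (a t / VP) t) :
    ∀ t ∈ I, 0 < r t → Real.cos (devAngle θ γP t) ≠ 0 →
      HasDerivAt (tgoDP VT γT VP r θ γP)
        (-1 + Vlos VT γT VP θ γP t ^ 2 * (1 / Real.cos (devAngle θ γP t) ^ 2)
              / (VP ^ 2 - VT ^ 2)
          - (r t * Vlos VT γT VP θ γP t * (1 / Real.cos (devAngle θ γP t) ^ 2)
              / (VP * (VP ^ 2 - VT ^ 2))) * a t) t :=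
  tgoDP_deriv_general VT γT VP hV2 I r θ γP a θd hr hθ hθd hγ
end

section
/- Let t0 < t1 be real numbers, let V : ℝ → ℝ be differentiable and nonnegative on [t0, t1], let μ : ℝ → ℝ be differentiable with μ(t) ≠ 0 on [t0, t1], and let b > 0. If V'(t) ≤ −b·V(t) − 2·(μ'(t)/μ(t))·V(t) for all t ∈ [t0, t1], then μ(t)²·V(t) ≤ exp(−b·(t − t0))·μ(t0)²·V(t0) for all t ∈ [t0, t1]. -/
/-! Multiplying the differential inequality by the integrating factor `exp (b (t - t0)) μ(t)²`
shows that `exp (b (t - t0)) μ(t)² V(t)` has nonpositive derivative, so it is antitone and its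
value at `t` is bounded by its value `μ(t0)² V(t0)` at `t0`. -/

open Set

theorem hasDerivWithinAt_exp_mul_sq_mul {V μ : ℝ → ℝ} {V'x μ'x b t0 x : ℝ} {s : Set ℝ}
    (hV : HasDerivWithinAt V V'x s x) (hμ : HasDerivWithinAt μ μ'x s x) :
    HasDerivWithinAt (fun t => Real.exp (b * (t - t0)) * μ t ^ 2 * V t)
      (Real.exp (b * (x - t0)) * (μ x ^ 2 * (V'x + b * V x) + 2 * μ x * μ'x * V x)) s x := by
  have hlin : HasDerivWithinAt (fun t => b * (t - t0)) b s x := by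
    simpa using ((hasDerivWithinAt_id x s).sub_const t0).const_mul b
  exact ((hlin.exp.mul (hμ.pow 2)).mul hV).congr_deriv
    (by simp only [Pi.mul_apply, Pi.pow_apply]; ring)

theorem sq_mul_add_two_mul_nonpos_of_le {v v' m m' b : ℝ} (hm : m ≠ 0)
    (h : v' ≤ -b * v - 2 * (m' / m) * v) :
    m ^ 2 * (v' + b * v) + 2 * m * m' * v ≤ 0 := by
  have hcancel : m ^ 2 * (m' / m) = m * m' := by field_simp
  linear_combination mul_le_mul_of_nonneg_left h (sq_nonneg m) - 2 * v * hcancel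

theorem antitoneOn_exp_mul_sq_mul {D : Set ℝ} (hD : Convex ℝ D) {V μ V' μ' : ℝ → ℝ}
    (b t0 : ℝ)
    (hV : ∀ t ∈ D, HasDerivWithinAt V (V' t) D t)
    (hμ : ∀ t ∈ D, HasDerivWithinAt μ (μ' t) D t)
    (hμne : ∀ t ∈ D, μ t ≠ 0)
    (hineq : ∀ t ∈ D, V' t ≤ -b * V t - 2 * (μ' t / μ t) * V t) :
    AntitoneOn (fun t => Real.exp (b * (t - t0)) * μ t ^ 2 * V t) D := by
  have hderiv := fun t ht =>
    hasDerivWithinAt_exp_mul_sq_mul (b := b) (t0 := t0) (hV t ht) (hμ t ht)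
  refine antitoneOn_of_hasDerivWithinAt_nonpos hD
    (fun t ht => (hderiv t ht).continuousWithinAt)
    (fun t ht => (hderiv t (interior_subset ht)).mono interior_subset)
    (fun t ht => ?_)
  have ht := interior_subset ht
  exact mul_nonpos_of_nonneg_of_nonpos (Real.exp_pos _).le
    (sq_mul_add_two_mul_nonpos_of_le (hμne t ht) (hineq t ht))

theorem lyapunov_comparison_general
    (t0 t1 : ℝ) (b : ℝ)
    (V μ V' μ' : ℝ → ℝ)
    (hV : ∀ t ∈ Set.Icc t0 t1, HasDerivWithinAt V (V' t) (Set.Icc t0 t1) t)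
    (hμ : ∀ t ∈ Set.Icc t0 t1, HasDerivWithinAt μ (μ' t) (Set.Icc t0 t1) t)
    (hμne : ∀ t ∈ Set.Icc t0 t1, μ t ≠ 0)
    (hineq : ∀ t ∈ Set.Icc t0 t1, V' t ≤ -b * V t - 2 * (μ' t / μ t) * V t) :
    ∀ t ∈ Set.Icc t0 t1,
      μ t ^ 2 * V t ≤ Real.exp (-b * (t - t0)) * μ t0 ^ 2 * V t0 := by
  intro t ht
  have ht0 : t0 ∈ Icc t0 t1 := ⟨le_rfl, ht.1.trans ht.2⟩
  have hle := antitoneOn_exp_mul_sq_mul (convex_Icc t0 t1) b t0 hV hμ hμne hineq ht0 ht ht.1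
  simp only [sub_self, mul_zero, Real.exp_zero, one_mul] at hle
  calc μ t ^ 2 * V t
      = Real.exp (-b * (t - t0)) * (Real.exp (b * (t - t0)) * μ t ^ 2 * V t) := by
        rw [neg_mul, Real.exp_neg]; field_simp
    _ ≤ Real.exp (-b * (t - t0)) * (μ t0 ^ 2 * V t0) := by gcongr
    _ = Real.exp (-b * (t - t0)) * μ t0 ^ 2 * V t0 := by ring

/-- Lemma 1 of the paper: a Grönwall-type prescribed-time
Lyapunov comparison estimate: if `V' ≤ −bV − 2(μ'/μ)V` on `[t0, t1]`, then
`μ(t)² V(t) ≤ exp(−b(t − t0)) μ(t0)² V(t0)` on `[t0, t1]`. -/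
theorem lyapunov_comparison
    (t0 t1 : ℝ) (h01 : t0 < t1) (b : ℝ) (hb : 0 < b)
    (V μ V' μ' : ℝ → ℝ)
    (hV : ∀ t ∈ Set.Icc t0 t1, HasDerivWithinAt V (V' t) (Set.Icc t0 t1) t)
    (hVnn : ∀ t ∈ Set.Icc t0 t1, 0 ≤ V t)
    (hμ : ∀ t ∈ Set.Icc t0 t1, HasDerivWithinAt μ (μ' t) (Set.Icc t0 t1) t)
    (hμne : ∀ t ∈ Set.Icc t0 t1, μ t ≠ 0)
    (hineq : ∀ t ∈ Set.Icc t0 t1, V' t ≤ -b * V t - 2 * (μ' t / μ t) * V t) :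
    ∀ t ∈ Set.Icc t0 t1,
      μ t ^ 2 * V t ≤ Real.exp (-b * (t - t0)) * μ t0 ^ 2 * V t0 :=
  lyapunov_comparison_general t0 t1 b V μ V' μ' hV hμ hμne hineq
end

section
/- Consider the planar engagement kinematics with constants V_T, γ_T, differentiable functions r, θ, γ_P, V_P : ℝ → ℝ and control a : ℝ → ℝ satisfying, on an interval I with r > 0 and V_P ≠ 0, r' = V_T cos(γ_T − θ) − V_P cos δ, r·θ' = V_T sin(γ_T − θ) − V_P sin δ, γ_P' = a·cos δ / V_P, and V_P' = a·sin δ, where δ = γ_P − θ. Define V_r = V_T cos(γ_T − θ) − V_P cos δ and V_θ = V_T sin(γ_T − θ) − V_P sin δ. Then for all t ∈ I, V_r'(t) = V_θ(t)²/r(t) and V_θ'(t) = −V_r(t)·V_θ(t)/r(t) − a(t). -/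
/-- Relative velocity component along the line of sight (time-varying pursuer speed). -/
noncomputable def VradT (VT γT : ℝ) (θ γP VP : ℝ → ℝ) (t : ℝ) : ℝ :=
  VT * Real.cos (γT - θ t) - VP t * Real.cos (devAngle θ γP t)

/-- Relative velocity component across the line of sight (time-varying pursuer speed). -/
noncomputable def VlosT (VT γT : ℝ) (θ γP VP : ℝ → ℝ) (t : ℝ) : ℝ :=
  VT * Real.sin (γT - θ t) - VP t * Real.sin (devAngle θ γP t)

/-!
Keep `θ'` symbolic. In the line-of-sight frame, which turns at rate `θ'`, each velocity component
picks up `±θ'` times the other one; since the pursuer's acceleration is normal to its velocity, the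
`a`-terms of `V_P'` and `V_P γ_P'` cancel in `V_r'` and add up to `a` in `V_θ'`. Hence
`V_r' = V_θ θ'` and `V_θ' = -V_r θ' - a`, and `r θ' = V_θ` finishes.
-/

open Real

section PolarComponents

variable {v φ : ℝ → ℝ} {v' φ' t : ℝ}

theorem hasDerivAt_mul_cos (hv : HasDerivAt v v' t) (hφ : HasDerivAt φ φ' t) :
    HasDerivAt (fun s => v s * cos (φ s)) (v' * cos (φ t) - v t * sin (φ t) * φ') t :=
  (hv.mul hφ.cos).congr_deriv (by ring)

theorem hasDerivAt_mul_sin (hv : HasDerivAt v v' t) (hφ : HasDerivAt φ φ' t) :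
    HasDerivAt (fun s => v s * sin (φ s)) (v' * sin (φ t) + v t * cos (φ t) * φ') t :=
  (hv.mul hφ.sin).congr_deriv (by ring)

variable {a ω : ℝ}

/-- `φ` is the angle of a velocity of magnitude `v` to a frame turning at rate `ω`, and the
acceleration `a` is normal to that velocity. -/
theorem hasDerivAt_mul_cos_of_normal_accel (hv0 : v t ≠ 0)
    (hv : HasDerivAt v (a * sin (φ t)) t) (hφ : HasDerivAt φ (a * cos (φ t) / v t - ω) t) :
    HasDerivAt (fun s => v s * cos (φ s)) (v t * sin (φ t) * ω) t := by
  have hturn : v t * (a * cos (φ t) / v t) = a * cos (φ t) := mul_div_cancel₀ _ hv0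
  refine (hasDerivAt_mul_cos hv hφ).congr_deriv ?_
  linear_combination (-sin (φ t)) * hturn

theorem hasDerivAt_mul_sin_of_normal_accel (hv0 : v t ≠ 0)
    (hv : HasDerivAt v (a * sin (φ t)) t) (hφ : HasDerivAt φ (a * cos (φ t) / v t - ω) t) :
    HasDerivAt (fun s => v s * sin (φ s)) (a - v t * cos (φ t) * ω) t := by
  have hturn : v t * (a * cos (φ t) / v t) = a * cos (φ t) := mul_div_cancel₀ _ hv0
  refine (hasDerivAt_mul_sin hv hφ).congr_deriv ?_
  linear_combination cos (φ t) * hturn + a * sin_sq_add_cos_sq (φ t)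

end PolarComponents

section LineOfSightFrame

variable {VT γT t ω : ℝ} {θ γP VP a : ℝ → ℝ}

theorem hasDerivAt_const_mul_cos_sub (hθ : HasDerivAt θ ω t) :
    HasDerivAt (fun s => VT * cos (γT - θ s)) (VT * sin (γT - θ t) * ω) t :=
  (hasDerivAt_mul_cos (hasDerivAt_const t VT) (hθ.const_sub γT)).congr_deriv (by ring)

theorem hasDerivAt_const_mul_sin_sub (hθ : HasDerivAt θ ω t) :
    HasDerivAt (fun s => VT * sin (γT - θ s)) (-(VT * cos (γT - θ t) * ω)) t :=
  (hasDerivAt_mul_sin (hasDerivAt_const t VT) (hθ.const_sub γT)).congr_deriv (by ring)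

variable (hVP0 : VP t ≠ 0) (hθ : HasDerivAt θ ω t)
  (hγ : HasDerivAt γP (a t * cos (devAngle θ γP t) / VP t) t)
  (hVP : HasDerivAt VP (a t * sin (devAngle θ γP t)) t)
include hVP0 hθ hγ hVP

theorem hasDerivAt_VradT :
    HasDerivAt (VradT VT γT θ γP VP) (VlosT VT γT θ γP VP t * ω) t :=
  ((hasDerivAt_const_mul_cos_sub hθ).sub
    (hasDerivAt_mul_cos_of_normal_accel hVP0 hVP (hγ.sub hθ))).congr_deriv
    (by rw [VlosT]; ring)

theorem hasDerivAt_VlosT :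
    HasDerivAt (VlosT VT γT θ γP VP) (-(VradT VT γT θ γP VP t * ω) - a t) t :=
  ((hasDerivAt_const_mul_sin_sub hθ).sub
    (hasDerivAt_mul_sin_of_normal_accel hVP0 hVP (hγ.sub hθ))).congr_deriv
    (by rw [VradT]; ring)

end LineOfSightFrame

theorem Vr_Vtheta_deriv_TPN_general
    (VT γT : ℝ) (I : Set ℝ) (r θ γP VP a θd : ℝ → ℝ)
    (hrpos : ∀ t ∈ I, 0 < r t)
    (hVPne : ∀ t ∈ I, VP t ≠ 0)
    (hθ : ∀ t ∈ I, HasDerivAt θ (θd t) t)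
    (hθd : ∀ t ∈ I, r t * θd t = VlosT VT γT θ γP VP t)
    (hγ : ∀ t ∈ I, HasDerivAt γP (a t * Real.cos (devAngle θ γP t) / VP t) t)
    (hVPd : ∀ t ∈ I, HasDerivAt VP (a t * Real.sin (devAngle θ γP t)) t) :
    ∀ t ∈ I,
      HasDerivAt (VradT VT γT θ γP VP) (VlosT VT γT θ γP VP t ^ 2 / r t) t ∧
      HasDerivAt (VlosT VT γT θ γP VP)
        (-(VradT VT γT θ γP VP t * VlosT VT γT θ γP VP t) / r t - a t) t := by
  intro t ht
  have hθd_eq : θd t = VlosT VT γT θ γP VP t / r t := by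
    rw [← hθd t ht, mul_div_cancel_left₀ _ (hrpos t ht).ne']
  refine ⟨(hasDerivAt_VradT (hVPne t ht) (hθ t ht) (hγ t ht) (hVPd t ht)).congr_deriv ?_,
    (hasDerivAt_VlosT (hVPne t ht) (hθ t ht) (hγ t ht) (hVPd t ht)).congr_deriv ?_⟩ <;>
  · rw [hθd_eq]
    ring

/-- kinematic derivative identities for a
true-proportional-navigation pursuer whose acceleration acts perpendicular
to the line of sight: `V_r' = V_θ²/r` and `V_θ' = −V_r V_θ/r − a`. -/
theorem Vr_Vtheta_deriv_TPN
    (VT γT : ℝ) (I : Set ℝ) (r θ γP VP a θd : ℝ → ℝ)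
    (hrpos : ∀ t ∈ I, 0 < r t)
    (hVPne : ∀ t ∈ I, VP t ≠ 0)
    (hr : ∀ t ∈ I, HasDerivAt r (VradT VT γT θ γP VP t) t)
    (hθ : ∀ t ∈ I, HasDerivAt θ (θd t) t)
    (hθd : ∀ t ∈ I, r t * θd t = VlosT VT γT θ γP VP t)
    (hγ : ∀ t ∈ I, HasDerivAt γP (a t * Real.cos (devAngle θ γP t) / VP t) t)
    (hVPd : ∀ t ∈ I, HasDerivAt VP (a t * Real.sin (devAngle θ γP t)) t) :
    ∀ t ∈ I,
      HasDerivAt (VradT VT γT θ γP VP) (VlosT VT γT θ γP VP t ^ 2 / r t) t ∧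
      HasDerivAt (VlosT VT γT θ γP VP)
        (-(VradT VT γT θ γP VP t * VlosT VT γT θ γP VP t) / r t - a t) t :=
  Vr_Vtheta_deriv_TPN_general VT γT I r θ γP VP a θd hrpos hVPne hθ hθd hγ hVPd
end

section
/- Let N ≥ 1, let L be a real N×N matrix, let λ > 0 satisfy x ⬝ (L x) ≥ λ‖x‖² for all x ∈ ℝᴺ, let α > 0 and β with βλ ≥ 1, and let φ : ℝ → ℝ be a function with φ(t) ≤ 0 on an interval I. Suppose e : ℝ → ℝᴺ is differentiable on I with e'(t) = (−α + β·φ(t))·(L e(t)), and set V(t) = ‖e(t)‖²/2. Then for all t ∈ I, V'(t) ≤ −2αλ·V(t) + 2·φ(t)·V(t). -/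
open Matrix

/-!
Along the flow, `V' = ⟪e, e'⟫ = c ⟪e, L e⟫` with gain `c = -α + βφ ≤ 0`. A nonpositive gain turns
the lower bound `⟪e, L e⟫ ≥ λ‖e‖²` into the upper bound `V' ≤ 2cλV`, and `βλ ≥ 1` with `φ ≤ 0`
gives `βλφ ≤ φ`.
-/

lemma neg_add_mul_nonpos_of_one_le_mul {α β lam φ : ℝ} (hlam : 0 < lam) (hα : 0 ≤ α)
    (hβ : 1 ≤ β * lam) (hφ : φ ≤ 0) : -α + β * φ ≤ 0 := by
  have hβpos : 0 < β := pos_of_mul_pos_left (one_pos.trans_le hβ) hlam.le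
  linarith [mul_nonpos_of_nonneg_of_nonpos hβpos.le hφ]

lemma neg_add_mul_mul_le {α β lam φ q s : ℝ} (hlam : 0 < lam) (hα : 0 ≤ α)
    (hβ : 1 ≤ β * lam) (hφ : φ ≤ 0) (hs : 0 ≤ s) (hq : lam * s ≤ q) :
    (-α + β * φ) * q ≤ (-α * lam + φ) * s :=
  calc (-α + β * φ) * q
      ≤ (-α + β * φ) * (lam * s) :=
        mul_le_mul_of_nonpos_left hq (neg_add_mul_nonpos_of_one_le_mul hlam hα hβ hφ)
    _ = -α * lam * s + (β * lam) * (φ * s) := by ring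
    _ ≤ -α * lam * s + 1 * (φ * s) := by
        have hφs : φ * s ≤ 0 := mul_nonpos_of_nonpos_of_nonneg hφ hs
        linarith [mul_le_mul_of_nonpos_right hβ hφs]
    _ = (-α * lam + φ) * s := by ring

lemma EuclideanSpace.inner_toLp_mulVec {N : ℕ} (L : Matrix (Fin N) (Fin N) ℝ)
    (x : EuclideanSpace ℝ (Fin N)) :
    inner ℝ x (WithLp.toLp 2 (L *ᵥ x)) = x ⬝ᵥ L *ᵥ x := by
  rw [EuclideanSpace.inner_eq_star_dotProduct, star_trivial, dotProduct_comm]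

lemma HasDerivAt.half_norm_sq_of_smul_mulVec {N : ℕ} {L : Matrix (Fin N) (Fin N) ℝ} {c t : ℝ}
    {e : ℝ → EuclideanSpace ℝ (Fin N)} (he : HasDerivAt e (c • WithLp.toLp 2 (L *ᵥ e t)) t) :
    HasDerivAt (fun τ => ‖e τ‖ ^ 2 / 2) (c * (e t ⬝ᵥ L *ᵥ e t)) t := by
  refine (he.norm_sq.div_const 2).congr_deriv ?_
  rw [real_inner_smul_right, EuclideanSpace.inner_toLp_mulVec]
  ring

theorem lyapunov_inequality_step_general
    (N : ℕ) (L : Matrix (Fin N) (Fin N) ℝ)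
    (lam : ℝ) (hlam : 0 < lam)
    (hquad : ∀ x : EuclideanSpace ℝ (Fin N), lam * ‖x‖ ^ 2 ≤ x ⬝ᵥ L.mulVec x)
    (α β : ℝ) (hα : 0 < α) (hβ : 1 ≤ β * lam)
    (φ : ℝ → ℝ) (I : Set ℝ) (hφ : ∀ t ∈ I, φ t ≤ 0)
    (e : ℝ → EuclideanSpace ℝ (Fin N))
    (hode : ∀ t ∈ I,
      HasDerivAt e ((-α + β * φ t) • (WithLp.toLp 2 (L.mulVec (e t)) : EuclideanSpace ℝ (Fin N))) t) :
    ∀ t ∈ I, ∃ Vd : ℝ,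
      HasDerivAt (fun τ => ‖e τ‖ ^ 2 / 2) Vd t ∧
      Vd ≤ -(2 * α * lam) * (‖e t‖ ^ 2 / 2) + 2 * φ t * (‖e t‖ ^ 2 / 2) := by
  intro t ht
  refine ⟨_, (hode t ht).half_norm_sq_of_smul_mulVec, ?_⟩
  calc (-α + β * φ t) * (e t ⬝ᵥ L *ᵥ e t)
      ≤ (-α * lam + φ t) * ‖e t‖ ^ 2 :=
        neg_add_mul_mul_le hlam hα.le hβ (hφ t ht) (by positivity) (hquad (e t))
    _ = _ := by ring

/-- equations (13)–(14) of the paper: the Lyapunov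
differential inequality step. With `V = ‖e‖²/2` along `e' = (−α + βφ) L e`,
where `x ⬝ (L x) ≥ λ‖x‖²`, `α > 0`, `βλ ≥ 1`, and `φ ≤ 0` on `I`, one gets
`V' ≤ −2αλ V + 2φ V` on `I`. -/
theorem lyapunov_inequality_step
    (N : ℕ) (hN : 1 ≤ N) (L : Matrix (Fin N) (Fin N) ℝ)
    (lam : ℝ) (hlam : 0 < lam)
    (hquad : ∀ x : EuclideanSpace ℝ (Fin N), lam * ‖x‖ ^ 2 ≤ x ⬝ᵥ L.mulVec x)
    (α β : ℝ) (hα : 0 < α) (hβ : 1 ≤ β * lam)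
    (φ : ℝ → ℝ) (I : Set ℝ) (hφ : ∀ t ∈ I, φ t ≤ 0)
    (e : ℝ → EuclideanSpace ℝ (Fin N))
    (hode : ∀ t ∈ I,
      HasDerivAt e ((-α + β * φ t) • (WithLp.toLp 2 (L.mulVec (e t)) : EuclideanSpace ℝ (Fin N))) t) :
    ∀ t ∈ I, ∃ Vd : ℝ,
      HasDerivAt (fun τ => ‖e τ‖ ^ 2 / 2) Vd t ∧
      Vd ≤ -(2 * α * lam) * (‖e t‖ ^ 2 / 2) + 2 * φ t * (‖e t‖ ^ 2 / 2) :=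
  lyapunov_inequality_step_general N L lam hlam hquad α β hα hβ φ I hφ e hode
end
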